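/- Let α > 1 be real, let k ≥ 0 be an integer, and let f : [0, π] → ℝ be continuously differentiable with f(0) = 0 and f(π) = (2k+1)π. Then π ∫₀^π (2 + f'(r)² + sin(f(r))²/sin(r)²)^α sin(r) dr ≥ (4k+4)^α · 2π. -/

import Mathlib

open Real intervalIntegral MeasureTheory Set

/-!
Write `g = 2 + f'² + sin² f / sin²` for the energy density. Pointwise AM-GM gives
`g sin r ≥ 2 sin r + 2 |f' sin f| = 2 sin r + 2 |(cos ∘ f)'|`, and `cos ∘ f` swings between `±1` at
least `2k+1` times, since `f` crosses every multiple of `π` between `0` and `(2k+1)π`; hence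
`∫₀^π g sin ≥ 4 + 4(2k+1) = 2(4k+4)`. As `∫₀^π sin = 2`, Jensen's inequality for the convex map
`x ↦ x^α` against the weight `sin` turns this into `∫₀^π g^α sin ≥ 2 (4k+4)^α`. Integrability of
`g^α sin` comes from `|sin (f r)| ≤ (π L / 2) sin r` whenever `|f'| ≤ L`.
-/

lemma rpow_tangent_le {α c x : ℝ} (hα : 1 ≤ α) (hc : 0 < c) (hx : 0 ≤ x) :
    c ^ α + α * c ^ (α - 1) * (x - c) ≤ x ^ α := by
  have hB := one_add_mul_self_le_rpow_one_add (s := x / c - 1)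
    (by linarith [div_nonneg hx hc.le]) hα
  rw [add_sub_cancel, div_rpow hx hc.le, le_div_iff₀ (rpow_pos_of_pos hc α)] at hB
  calc c ^ α + α * c ^ (α - 1) * (x - c) = (1 + α * (x / c - 1)) * c ^ α := by
        rw [rpow_sub_one hc.ne']; field_simp
    _ ≤ x ^ α := hB

theorem rpow_mul_integral_le_of_mul_integral_le {α c a b : ℝ} {g w : ℝ → ℝ} (hα : 1 ≤ α)
    (hc : 0 < c) (hab : a ≤ b) (hg : ∀ x ∈ Icc a b, 0 ≤ g x) (hw : ∀ x ∈ Icc a b, 0 ≤ w x)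
    (hwi : IntervalIntegrable w volume a b)
    (hgw : IntervalIntegrable (fun x => g x * w x) volume a b)
    (hgαw : IntervalIntegrable (fun x => g x ^ α * w x) volume a b)
    (h : c * ∫ x in a..b, w x ≤ ∫ x in a..b, g x * w x) :
    c ^ α * ∫ x in a..b, w x ≤ ∫ x in a..b, g x ^ α * w x := by
  set m := α * c ^ (α - 1)
  have hm : 0 ≤ m := by positivity
  have htangent : ∫ x in a..b, ((c ^ α - m * c) * w x + m * (g x * w x)) ≤
      ∫ x in a..b, g x ^ α * w x :=
    integral_mono_on hab ((hwi.const_mul _).add (hgw.const_mul _)) hgαw fun x hx => by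
      have := mul_le_mul_of_nonneg_right (rpow_tangent_le hα hc (hg x hx)) (hw x hx)
      linarith
  rw [integral_add (hwi.const_mul _) (hgw.const_mul _), intervalIntegral.integral_const_mul,
    intervalIntegral.integral_const_mul] at htangent
  linarith [mul_le_mul_of_nonneg_left h hm]

lemma intervalIntegrable_of_continuousOn_Ioo_of_abs_le {F : ℝ → ℝ} {a b C : ℝ} (hab : a ≤ b)
    (hF : ContinuousOn F (Ioo a b)) (hC : ∀ x ∈ Ioo a b, |F x| ≤ C) :
    IntervalIntegrable F volume a b := by
  rw [intervalIntegrable_iff_integrableOn_Ioo_of_le hab]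
  refine IntegrableOn.of_bound (by simp) (hF.aestronglyMeasurable measurableSet_Ioo) C ?_
  filter_upwards [ae_restrict_mem measurableSet_Ioo] with x hx
  exact hC x hx

lemma two_mul_abs_mul_le {a b s : ℝ} (hs : 0 ≤ s) (hb : s = 0 → b = 0) :
    2 * |a * b| ≤ (a ^ 2 + b ^ 2 / s ^ 2) * s := by
  obtain rfl | hs := hs.eq_or_lt
  · simp [hb rfl]
  rw [abs_mul, ← sq_abs a, ← sq_abs b, ← div_pow]
  have hb' : |b| = |b| / s * s := (div_mul_cancel₀ _ hs.ne').symm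
  generalize |b| / s = u at hb' ⊢
  rw [hb']
  nlinarith [mul_nonneg hs.le (sq_nonneg (|a| - u))]

lemma abs_sin_le_abs_sub_of_sin_eq_zero {x y : ℝ} (hy : sin y = 0) : |sin x| ≤ |x - y| := by
  have : sin x = sin (x - y) * cos y := by
    conv_lhs => rw [← sub_add_cancel x y]
    rw [sin_add, hy, mul_zero, add_zero]
  rw [this, abs_mul]
  exact (mul_le_of_le_one_right (abs_nonneg _) (abs_cos_le_one y)).trans abs_sin_le_abs

lemma two_div_pi_mul_min_le_sin {x : ℝ} (hx₀ : 0 ≤ x) (hxπ : x ≤ π) :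
    2 / π * min x (π - x) ≤ sin x := by
  rcases le_total x (π / 2) with h | h
  · exact (mul_le_mul_of_nonneg_left (min_le_left _ _) (by positivity)).trans (mul_le_sin hx₀ h)
  · rw [← sin_pi_sub]
    exact (mul_le_mul_of_nonneg_left (min_le_right _ _) (by positivity)).trans
      (mul_le_sin (by linarith) (by linarith))

lemma eq_zero_or_eq_pi_of_sin_eq_zero {x : ℝ} (hx : x ∈ Icc 0 π) (h : sin x = 0) :
    x = 0 ∨ x = π := by
  obtain hπ | hπ := hx.2.lt_or_eq
  · exact .inl ((sin_eq_zero_iff_of_lt_of_lt (by linarith [hx.1, pi_pos]) hπ).1 h)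
  · exact .inr hπ

section Profile

variable {f f' : ℝ → ℝ}

lemma abs_cos_sub_cos_le_integral_abs {a b : ℝ} (hab : a ≤ b)
    (hderiv : ∀ r ∈ Icc a b, HasDerivAt f (f' r) r) (hcont : ContinuousOn f' (Icc a b)) :
    |cos (f a) - cos (f b)| ≤ ∫ r in a..b, |f' r * sin (f r)| := by
  have hftc : ∫ r in a..b, f' r * sin (f r) = cos (f a) - cos (f b) := by
    rw [integral_eq_sub_of_hasDerivAt (f := fun r => -cos (f r))]
    · ring
    · intro r hr
      rw [uIcc_of_le hab] at hr
      convert (hderiv r hr).cos.fun_neg using 1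
      ring
    · refine (hcont.mul (continuous_sin.comp_continuousOn ?_)).intervalIntegrable_of_Icc hab
      exact fun r hr => (hderiv r hr).continuousAt.continuousWithinAt
  exact hftc ▸ abs_integral_le_integral_abs hab

theorem two_mul_le_integral_abs_deriv_mul_sin_comp (n : ℕ) (j : ℤ) {a b : ℝ} (hab : a ≤ b)
    (hderiv : ∀ r ∈ Icc a b, HasDerivAt f (f' r) r) (hcont : ContinuousOn f' (Icc a b))
    (ha : f a = j * π) (hb : f b = (j + n) * π) :
    2 * n ≤ ∫ r in a..b, |f' r * sin (f r)| := by
  induction n generalizing j a with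
  | zero => simpa using integral_nonneg hab fun r _ => abs_nonneg (f' r * sin (f r))
  | succ n ih =>
    have hfcont : ContinuousOn f (Icc a b) := fun r hr =>
      (hderiv r hr).continuousAt.continuousWithinAt
    obtain ⟨c, hc, hfc⟩ : ∃ c ∈ Icc a b, f c = (j + 1) * π :=
      intermediate_value_Icc hab hfcont ⟨by rw [ha]; linarith [pi_pos],
        by rw [hb]; push_cast; linarith [mul_nonneg n.cast_nonneg pi_pos.le]⟩
    have hsub₁ : Icc a c ⊆ Icc a b := Icc_subset_Icc_right hc.2
    have hsub₂ : Icc c b ⊆ Icc a b := Icc_subset_Icc_left hc.1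
    have hfirst := abs_cos_sub_cos_le_integral_abs hc.1 (fun r hr => hderiv r (hsub₁ hr))
      (hcont.mono hsub₁)
    have hcross : |cos (f a) - cos (f c)| = 2 := by
      rw [ha, hfc, add_mul, one_mul, cos_add_pi, sub_neg_eq_add, ← two_mul, abs_mul,
        abs_cos_int_mul_pi, abs_two, mul_one]
    have hrest := ih (j + 1) hc.2 (fun r hr => hderiv r (hsub₂ hr)) (hcont.mono hsub₂)
      (by rw [hfc]; push_cast; ring) (by rw [hb]; push_cast; ring)
    have hintegrable : ContinuousOn (fun r => |f' r * sin (f r)|) (Icc a b) :=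
      (hcont.mul (continuous_sin.comp_continuousOn hfcont)).abs
    rw [← integral_add_adjacent_intervals
      ((hintegrable.mono hsub₁).intervalIntegrable_of_Icc hc.1)
      ((hintegrable.mono hsub₂).intervalIntegrable_of_Icc hc.2)]
    push_cast
    linarith

variable {L : ℝ}

lemma abs_sin_comp_le_mul_sin (hderiv : ∀ r ∈ Icc 0 π, HasDerivAt f (f' r) r)
    (hL : ∀ r ∈ Icc 0 π, ‖f' r‖ ≤ L) (h0 : sin (f 0) = 0) (hπ : sin (f π) = 0) {r : ℝ}
    (hr : r ∈ Icc 0 π) : |sin (f r)| ≤ π * L / 2 * sin r := by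
  have hLip : ∀ x ∈ Icc 0 π, |f r - f x| ≤ L * |r - x| := fun x hx => by
    simpa only [Real.norm_eq_abs] using (convex_Icc 0 π).norm_image_sub_le_of_norm_hasDerivWithin_le
      (fun t ht => (hderiv t ht).hasDerivWithinAt) hL hx hr
  have hL0 : 0 ≤ L := (norm_nonneg _).trans (hL r hr)
  have hmin : |sin (f r)| ≤ L * min r (π - r) := by
    rw [mul_min_of_nonneg _ _ hL0]
    refine le_min ?_ ?_
    · calc |sin (f r)| ≤ |f r - f 0| := abs_sin_le_abs_sub_of_sin_eq_zero h0
        _ ≤ L * |r - 0| := hLip 0 ⟨le_rfl, pi_pos.le⟩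
        _ = L * r := by rw [sub_zero, abs_of_nonneg hr.1]
    · calc |sin (f r)| ≤ |f r - f π| := abs_sin_le_abs_sub_of_sin_eq_zero hπ
        _ ≤ L * |r - π| := hLip π ⟨pi_pos.le, le_rfl⟩
        _ = L * (π - r) := by rw [abs_sub_comm, abs_of_nonneg (sub_nonneg.2 hr.2)]
  calc |sin (f r)| ≤ L * min r (π - r) := hmin
    _ = π * L / 2 * (2 / π * min r (π - r)) := by field_simp
    _ ≤ π * L / 2 * sin r :=
      mul_le_mul_of_nonneg_left (two_div_pi_mul_min_le_sin hr.1 hr.2) (by positivity)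

noncomputable def energyDensity (f f' : ℝ → ℝ) (r : ℝ) : ℝ :=
  2 + f' r ^ 2 + sin (f r) ^ 2 / sin r ^ 2

lemma energyDensity_nonneg (f f' : ℝ → ℝ) (r : ℝ) : 0 ≤ energyDensity f f' r := by
  unfold energyDensity
  positivity

lemma energyDensity_le (hderiv : ∀ r ∈ Icc 0 π, HasDerivAt f (f' r) r)
    (hL : ∀ r ∈ Icc 0 π, ‖f' r‖ ≤ L) (h0 : sin (f 0) = 0) (hπ : sin (f π) = 0) {r : ℝ}
    (hr : r ∈ Icc 0 π) : energyDensity f f' r ≤ 2 + L ^ 2 + (π * L / 2) ^ 2 := by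
  have hq : sin (f r) ^ 2 / sin r ^ 2 ≤ (π * L / 2) ^ 2 := by
    refine div_le_of_le_mul₀ (sq_nonneg _) (sq_nonneg _) ?_
    rw [← mul_pow, ← sq_abs]
    exact pow_le_pow_left₀ (abs_nonneg _) (abs_sin_comp_le_mul_sin hderiv hL h0 hπ hr) 2
  have hf' : f' r ^ 2 ≤ L ^ 2 := by
    rw [← sq_abs]
    exact pow_le_pow_left₀ (abs_nonneg _) (hL r hr) 2
  unfold energyDensity
  linarith

lemma continuousOn_energyDensity (hderiv : ∀ r ∈ Icc 0 π, HasDerivAt f (f' r) r)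
    (hcont : ContinuousOn f' (Icc 0 π)) : ContinuousOn (energyDensity f f') (Ioo 0 π) := by
  have hf : ContinuousOn f (Ioo 0 π) := fun r hr =>
    (hderiv r (Ioo_subset_Icc_self hr)).continuousAt.continuousWithinAt
  refine (continuousOn_const.add ((hcont.mono Ioo_subset_Icc_self).pow 2)).add
    (((continuous_sin.comp_continuousOn hf).pow 2).div (continuous_sin.continuousOn.pow 2)
      fun r hr => ?_)
  exact pow_ne_zero 2 (sin_pos_of_pos_of_lt_pi hr.1 hr.2).ne'

lemma intervalIntegrable_energyDensity_rpow_mul_sin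
    (hderiv : ∀ r ∈ Icc 0 π, HasDerivAt f (f' r) r) (hcont : ContinuousOn f' (Icc 0 π))
    (h0 : sin (f 0) = 0) (hπ : sin (f π) = 0) {β : ℝ} (hβ : 0 ≤ β) :
    IntervalIntegrable (fun r => energyDensity f f' r ^ β * sin r) volume 0 π := by
  obtain ⟨L, hL⟩ := isCompact_Icc.exists_bound_of_continuousOn hcont
  refine intervalIntegrable_of_continuousOn_Ioo_of_abs_le pi_pos.le
    (((continuousOn_energyDensity hderiv hcont).rpow_const fun _ _ => .inr hβ).mul
      continuous_sin.continuousOn) (C := (2 + L ^ 2 + (π * L / 2) ^ 2) ^ β) fun r hr => ?_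
  have hg := energyDensity_nonneg f f' r
  rw [abs_mul, abs_of_nonneg (rpow_nonneg hg β), ← mul_one ((2 + L ^ 2 + _) ^ β)]
  exact mul_le_mul (rpow_le_rpow hg (energyDensity_le hderiv hL h0 hπ (Ioo_subset_Icc_self hr)) hβ)
    (abs_sin_le_one r) (abs_nonneg _) (by positivity)

theorem four_mul_add_four_le_integral_energyDensity_mul_sin (n : ℕ) (j : ℤ)
    (hderiv : ∀ r ∈ Icc 0 π, HasDerivAt f (f' r) r) (hcont : ContinuousOn f' (Icc 0 π))
    (h0 : f 0 = j * π) (hπ : f π = (j + n) * π) :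
    4 * n + 4 ≤ ∫ r in 0..π, energyDensity f f' r * sin r := by
  have hsin0 : sin (f 0) = 0 := by rw [h0]; exact sin_int_mul_pi j
  have hsinπ : sin (f π) = 0 := by rw [hπ]; exact_mod_cast sin_int_mul_pi (j + n)
  have hvar := two_mul_le_integral_abs_deriv_mul_sin_comp n j pi_pos.le hderiv hcont h0 hπ
  have hf : ContinuousOn f (Icc 0 π) := fun r hr => (hderiv r hr).continuousAt.continuousWithinAt
  have hsin_int : IntervalIntegrable (fun r => 2 * sin r) volume 0 π :=
    (continuous_sin.intervalIntegrable 0 π).const_mul 2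
  have habs_int : IntervalIntegrable (fun r => 2 * |f' r * sin (f r)|) volume 0 π :=
    (((hcont.mul (continuous_sin.comp_continuousOn hf)).abs).intervalIntegrable_of_Icc
      pi_pos.le).const_mul 2
  calc (4 * n + 4 : ℝ) ≤ ∫ r in 0..π, (2 * sin r + 2 * |f' r * sin (f r)|) := by
        rw [integral_add hsin_int habs_int, intervalIntegral.integral_const_mul,
          intervalIntegral.integral_const_mul, integral_sin, cos_zero, cos_pi]
        linarith
    _ ≤ ∫ r in 0..π, energyDensity f f' r * sin r := by
      refine integral_mono_on pi_pos.le (hsin_int.add habs_int) ?_ fun r hr => ?_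
      · simpa using intervalIntegrable_energyDensity_rpow_mul_sin hderiv hcont hsin0 hsinπ
          zero_le_one
      have hb : sin r = 0 → sin (f r) = 0 := fun h => by
        rcases eq_zero_or_eq_pi_of_sin_eq_zero hr h with rfl | rfl <;> assumption
      have := two_mul_abs_mul_le (a := f' r) (sin_nonneg_of_nonneg_of_le_pi hr.1 hr.2) hb
      unfold energyDensity
      linarith

end Profile

/-- Energy lower bound `I_α(f) ≥ (4k+4)^α · 2π` for C¹ profiles `f : [0,π] → ℝ` with
`f 0 = 0` and `f π = (2k+1)π`, `k ≥ 0` (degree-one co-rotationally symmetric maps). -/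
theorem alpha_energy_lower_bound_odd (α : ℝ) (hα : 1 < α) (k : ℕ)
    (f f' : ℝ → ℝ)
    (hderiv : ∀ r ∈ Set.Icc (0 : ℝ) π, HasDerivAt f (f' r) r)
    (hcont : ContinuousOn f' (Set.Icc (0 : ℝ) π))
    (h0 : f 0 = 0) (hπ : f π = (2 * k + 1) * π) :
    (4 * (k : ℝ) + 4) ^ α * (2 * π) ≤
      π * ∫ r in (0 : ℝ)..π,
        (2 + f' r ^ 2 + sin (f r) ^ 2 / sin r ^ 2) ^ α * sin r := by
  have hsin0 : sin (f 0) = 0 := by simp [h0]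
  have hsinπ : sin (f π) = 0 := by rw [hπ]; exact_mod_cast sin_nat_mul_pi (2 * k + 1)
  have hlin := four_mul_add_four_le_integral_energyDensity_mul_sin (2 * k + 1) 0 hderiv hcont
    (by simp [h0]) (by rw [hπ]; push_cast; ring)
  have hint {β : ℝ} (hβ : 0 ≤ β) :=
    intervalIntegrable_energyDensity_rpow_mul_sin hderiv hcont hsin0 hsinπ hβ
  have hjensen := rpow_mul_integral_le_of_mul_integral_le (c := 4 * k + 4) (w := sin)
    hα.le (by positivity) pi_pos.le (fun r _ => energyDensity_nonneg f f' r)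
    (fun r hr => sin_nonneg_of_nonneg_of_le_pi hr.1 hr.2) (continuous_sin.intervalIntegrable 0 π)
    (by simpa using hint zero_le_one) (hint (by linarith))
    (by rw [integral_sin, cos_zero, cos_pi]; push_cast at hlin; linarith)
  rw [integral_sin, cos_zero, cos_pi] at hjensen
  calc (4 * (k : ℝ) + 4) ^ α * (2 * π) = π * ((4 * k + 4) ^ α * (1 - -1)) := by ring
    _ ≤ _ := mul_le_mul_of_nonneg_left hjensen pi_pos.le
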